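/- In the rank-one perturbation setting, assume γ ≠ 0. Then for Lebesgue-almost every x ∈ ℝ the density of the absolutely continuous part of μ_γ is d(μ_γ)_ac/dx (x) = (1/π) lim_{y→0+} Im F(x+iy) / |1 + γ F(x+iy)|². -/

import Mathlib

open MeasureTheory Filter Set Complex
open scoped ENNReal Topology InnerProductSpace

variable {H : Type*} [NormedAddCommGroup H] [InnerProductSpace ℂ H] [CompleteSpace H]

/-- The rank-one perturbation `A_γ = A + γ (·,φ)φ` of a (possibly unbounded) operator `A`. -/
noncomputable def rankOnePert (A : H →ₗ.[ℂ] H) (φ : H) (γ : ℝ) : H →ₗ.[ℂ] H :=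
  ⟨A.domain, A.toFun + (γ : ℂ) •
    ((((innerSL ℂ φ).smulRight φ : H →L[ℂ] H) : H →ₗ[ℂ] H).comp A.domain.subtype)⟩

/-- The Borel transform `F(z) = ∫ dμ(t) / (t - z)` of a measure `μ` on `ℝ`. -/
noncomputable def borelTransform (μ : Measure ℝ) (z : ℂ) : ℂ :=
  ∫ t : ℝ, ((t : ℂ) - z)⁻¹ ∂μ

/-!
Applying the resolvent of `A` to `(A_γ - z) R_γ(z) φ = φ` gives
`R_γ(z) φ = (1 - γ F_γ(z)) R_0(z) φ`, hence the Aronszajn–Krein formula `F_γ = F / (1 + γ F)` and `Im F_γ = Im F / |1 + γ F|²`. The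
right-hand side is therefore `π⁻¹ Im F_γ(x + iy)`, the Poisson integral of `μ_γ`, and the theorem
becomes Fatou's theorem for a finite measure `ν`. The superlevel sets of the Poisson kernel at `x`
are balls centred at `x`, so by the layer-cake formula the Poisson integral averages the ratios
`ν(B(x, r)) / |B(x, r)|`; these tend to the Radon–Nikodym derivative at almost every `x` by the
Besicovitch differentiation theorem.
-/

open scoped Real
open Metric (closedBall)

/-- `Im (t - (x + i y))⁻¹`, the Poisson kernel of the upper half-plane without its factor `π⁻¹`. -/
noncomputable def halfPlanePoissonKernel (x y t : ℝ) : ℝ := y / ((t - x) ^ 2 + y ^ 2)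

section PoissonKernel

variable {x y : ℝ}

lemma halfPlanePoissonKernel_nonneg (hy : 0 ≤ y) (t : ℝ) : 0 ≤ halfPlanePoissonKernel x y t := by
  unfold halfPlanePoissonKernel
  positivity

lemma halfPlanePoissonKernel_le_inv (hy : 0 < y) (t : ℝ) : halfPlanePoissonKernel x y t ≤ y⁻¹ := by
  rw [halfPlanePoissonKernel, div_le_iff₀ (by positivity)]
  field_simp
  nlinarith [sq_nonneg (t - x)]

lemma continuous_halfPlanePoissonKernel (hy : y ≠ 0) : Continuous (halfPlanePoissonKernel x y) :=
  continuous_const.div (by fun_prop) fun _ ↦ by positivity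

lemma integrable_halfPlanePoissonKernel (ν : Measure ℝ) [IsFiniteMeasure ν] (hy : 0 < y) :
    Integrable (halfPlanePoissonKernel x y) ν :=
  .of_bound (continuous_halfPlanePoissonKernel hy.ne').aestronglyMeasurable y⁻¹ <|
    .of_forall fun t ↦ by
      rw [Real.norm_of_nonneg (halfPlanePoissonKernel_nonneg hy.le t)]
      exact halfPlanePoissonKernel_le_inv hy t

lemma halfPlanePoissonKernel_eq_inv_one_add_sq (hy : y ≠ 0) (t : ℝ) :
    halfPlanePoissonKernel x y t = y⁻¹ * (1 + ((t - x) / y) ^ 2)⁻¹ := by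
  rw [halfPlanePoissonKernel]
  field_simp
  ring

lemma integrable_halfPlanePoissonKernel_volume (hy : 0 < y) :
    Integrable (halfPlanePoissonKernel x y) := by
  simp_rw [funext (halfPlanePoissonKernel_eq_inv_one_add_sq (x := x) hy.ne')]
  exact ((integrable_inv_one_add_sq.comp_div hy.ne').comp_sub_right x).const_mul _

lemma integral_halfPlanePoissonKernel_volume (hy : 0 < y) :
    ∫ t, halfPlanePoissonKernel x y t = π := by
  simp_rw [halfPlanePoissonKernel_eq_inv_one_add_sq hy.ne', integral_const_mul,
    integral_sub_right_eq_self (fun u ↦ (1 + (u / y) ^ 2)⁻¹) x,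
    Measure.integral_comp_div (fun u ↦ (1 + u ^ 2)⁻¹) y, integral_univ_inv_one_add_sq,
    smul_eq_mul, abs_of_pos hy]
  field_simp

lemma halfPlanePoissonKernel_superlevel_eq_closedBall {s : ℝ} (hy : 0 < y) (hs : 0 < s)
    (hsy : s ≤ y⁻¹) :
    {t | s ≤ halfPlanePoissonKernel x y t} = closedBall x √(y / s - y ^ 2) := by
  ext t
  have hsy' : y ^ 2 ≤ y / s := by
    rw [sq, div_eq_mul_inv]
    exact mul_le_mul_of_nonneg_left ((le_inv_comm₀ hs hy).1 hsy) hy.le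
  rw [mem_ofPred_eq, Metric.mem_closedBall, Real.dist_eq, halfPlanePoissonKernel,
    le_div_iff₀ (by positivity), ← Real.sqrt_sq_eq_abs, Real.sqrt_le_sqrt_iff (by linarith),
    le_sub_iff_add_le, le_div_iff₀ hs, mul_comm]

lemma halfPlanePoissonKernel_superlevel_eq_empty {s : ℝ} (hy : 0 < y) (hsy : y⁻¹ < s) :
    {t | s ≤ halfPlanePoissonKernel x y t} = ∅ :=
  eq_empty_of_forall_notMem fun t ht ↦ (hsy.trans_le ht).not_ge (halfPlanePoissonKernel_le_inv hy t)

lemma volume_real_halfPlanePoissonKernel_superlevel_le {s : ℝ} (hy : 0 < y) (hs : 0 < s) :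
    volume.real {t | s ≤ halfPlanePoissonKernel x y t} ≤ 2 * √y * s ^ (-(1 / 2) : ℝ) := by
  rcases le_or_gt s y⁻¹ with hsy | hsy
  · rw [halfPlanePoissonKernel_superlevel_eq_closedBall hy hs hsy,
      Real.volume_real_closedBall (Real.sqrt_nonneg _), mul_assoc]
    gcongr
    calc √(y / s - y ^ 2) ≤ √(y / s) := Real.sqrt_le_sqrt (by nlinarith)
      _ = √y * s ^ (-(1 / 2) : ℝ) := by
        rw [Real.sqrt_div hy.le, Real.rpow_neg hs.le, ← Real.sqrt_eq_rpow, div_eq_mul_inv]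
  · rw [halfPlanePoissonKernel_superlevel_eq_empty hy hsy, measureReal_empty]
    positivity

end PoissonKernel

lemma MeasureTheory.Integrable.integrableOn_measureReal_le {α : Type*} [MeasurableSpace α]
    {μ : Measure α} {f : α → ℝ} (hf : Integrable f μ) (hf_nn : 0 ≤ᵐ[μ] f) :
    IntegrableOn (fun s ↦ μ.real {a | s ≤ f a}) (Ioi 0) := by
  have hmeas : Measurable fun s : ℝ ↦ μ {a | s ≤ f a} :=
    Antitone.measurable fun s s' hss' ↦ measure_mono fun a ha ↦ hss'.trans ha
  refine integrable_toReal_of_lintegral_ne_top hmeas.aemeasurable ?_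
  rw [← lintegral_eq_lintegral_meas_le μ hf_nn hf.aemeasurable]
  exact hf.lintegral_lt_top.ne

lemma integrableOn_Ioc_rpow_neg_half (a : ℝ) :
    IntegrableOn (fun s : ℝ ↦ s ^ (-(1 / 2) : ℝ)) (Ioc 0 a) :=
  (intervalIntegral.intervalIntegrable_rpow' (by norm_num)).1

lemma integral_Ioc_rpow_neg_half {a : ℝ} (ha : 0 ≤ a) :
    ∫ s in Ioc 0 a, s ^ (-(1 / 2) : ℝ) = 2 * √a := by
  rw [← intervalIntegral.integral_of_le ha, integral_rpow (.inl (by norm_num)),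
    Real.zero_rpow (by norm_num), Real.sqrt_eq_rpow]
  norm_num
  ring

section PoissonIntegral

variable {ν : Measure ℝ} {x y L : ℝ}

lemma abs_measureReal_sub_volume_real_superlevel_le [IsFiniteMeasure ν] {s : ℝ} (hy : 0 < y)
    (hL : 0 ≤ L) (hs : 0 < s) :
    |ν.real {t | s ≤ halfPlanePoissonKernel x y t} -
        L * volume.real {t | s ≤ halfPlanePoissonKernel x y t}| ≤
      ν.real univ + 2 * L * √y * s ^ (-(1 / 2) : ℝ) := by
  set S := {t | s ≤ halfPlanePoissonKernel x y t}
  have hν : ν.real S ≤ ν.real univ := measureReal_mono (subset_univ S)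
  have hV : L * volume.real S ≤ L * (2 * √y * s ^ (-(1 / 2) : ℝ)) :=
    mul_le_mul_of_nonneg_left (volume_real_halfPlanePoissonKernel_superlevel_le hy hs) hL
  have hν_nn : 0 ≤ ν.real S := measureReal_nonneg
  have hV_nn : 0 ≤ L * volume.real S := mul_nonneg hL measureReal_nonneg
  rw [abs_sub_le_iff]
  constructor <;> linarith

lemma abs_measureReal_sub_volume_real_superlevel_le_of_ball {ε δ s : ℝ} (hy : 0 < y) (hδ : 0 < δ)
    (hball : ∀ r ∈ Ioc 0 δ, |ν.real (closedBall x r) - L * volume.real (closedBall x r)| ≤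
      ε * volume.real (closedBall x r))
    (hs : y / δ ^ 2 < s) (hsy : s ≠ y⁻¹) :
    |ν.real {t | s ≤ halfPlanePoissonKernel x y t} -
        L * volume.real {t | s ≤ halfPlanePoissonKernel x y t}| ≤
      ε * volume.real {t | s ≤ halfPlanePoissonKernel x y t} := by
  have hs0 : 0 < s := lt_trans (by positivity) hs
  rcases hsy.lt_or_gt with hsy | hsy
  · rw [halfPlanePoissonKernel_superlevel_eq_closedBall hy hs0 hsy.le]
    refine hball _ ⟨Real.sqrt_pos.2 ?_, (Real.sqrt_le_left hδ.le).2 ?_⟩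
    · rw [sub_pos, sq, div_eq_mul_inv]
      exact mul_lt_mul_of_pos_left ((lt_inv_comm₀ hs0 hy).1 hsy) hy
    · have hys : y / s < δ ^ 2 := by
        rw [div_lt_iff₀ hs0]
        rwa [div_lt_iff₀ (by positivity), mul_comm] at hs
      nlinarith
  · simp [halfPlanePoissonKernel_superlevel_eq_empty hy hsy]

theorem abs_integral_halfPlanePoissonKernel_sub_le [IsFiniteMeasure ν] {ε δ : ℝ} (hy : 0 < y)
    (hL : 0 ≤ L) (hε : 0 ≤ ε) (hδ : 0 < δ)
    (hball : ∀ r ∈ Ioc 0 δ, |ν.real (closedBall x r) - L * volume.real (closedBall x r)| ≤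
      ε * volume.real (closedBall x r)) :
    |∫ t, halfPlanePoissonKernel x y t ∂ν - π * L| ≤
      ν.real univ * (y / δ ^ 2) + 4 * L * y / δ + ε * π := by
  set G : ℝ → ℝ := fun s ↦ ν.real {t | s ≤ halfPlanePoissonKernel x y t}
  set V : ℝ → ℝ := fun s ↦ volume.real {t | s ≤ halfPlanePoissonKernel x y t}
  -- above level `a` the superlevel sets are balls of radius at most `δ`
  set a := y / δ ^ 2
  have hP := integrable_halfPlanePoissonKernel (x := x) ν hy
  have hPvol := integrable_halfPlanePoissonKernel_volume (x := x) hy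
  have hP_nn {ρ : Measure ℝ} : 0 ≤ᵐ[ρ] halfPlanePoissonKernel x y :=
    .of_forall (halfPlanePoissonKernel_nonneg hy.le)
  have hG : IntegrableOn G (Ioi 0) := hP.integrableOn_measureReal_le hP_nn
  have hV : IntegrableOn V (Ioi 0) := hPvol.integrableOn_measureReal_le hP_nn
  have hVπ : ∫ s in Ioi 0, V s = π := by
    rw [← integral_halfPlanePoissonKernel_volume hy, hPvol.integral_eq_integral_meas_le hP_nn]
  have hsplit : Ioc 0 a ∪ Ioi a = Ioi 0 := Ioc_union_Ioi_eq_Ioi (by positivity)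
  have hD : IntegrableOn (fun s ↦ |G s - L * V s|) (Ioi 0) := (hG.sub (hV.const_mul L)).abs
  have hconst : IntegrableOn (fun _ ↦ ν.real univ) (Ioc 0 a) :=
    integrableOn_const measure_Ioc_lt_top.ne
  have hrpow := (integrableOn_Ioc_rpow_neg_half a).const_mul (2 * L * √y)
  have hnear : ∫ s in Ioc 0 a, |G s - L * V s| ≤ ν.real univ * a + 4 * L * y / δ := calc
    _ ≤ ∫ s in Ioc 0 a, (ν.real univ + 2 * L * √y * s ^ (-(1 / 2) : ℝ)) :=
        setIntegral_mono_on (hD.mono_set (hsplit ▸ subset_union_left)) (hconst.add hrpow)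
          measurableSet_Ioc fun s hs ↦ abs_measureReal_sub_volume_real_superlevel_le hy hL hs.1
    _ = ν.real univ * a + 4 * L * y / δ := by
        rw [integral_add hconst hrpow,
          setIntegral_const, integral_const_mul, integral_Ioc_rpow_neg_half (by positivity),
          Real.volume_real_Ioc_of_le (by positivity), Real.sqrt_div' _ (by positivity),
          Real.sqrt_sq hδ.le, smul_eq_mul]
        field_simp
        rw [Real.sq_sqrt hy.le]
        ring
  have hfar : ∫ s in Ioi a, |G s - L * V s| ≤ ε * π := calc
    _ ≤ ∫ s in Ioi a, ε * V s := by
        refine setIntegral_mono_ae_restrict (hD.mono_set (hsplit ▸ subset_union_right))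
          ((hV.mono_set (hsplit ▸ subset_union_right)).const_mul ε) ?_
        filter_upwards [ae_restrict_mem measurableSet_Ioi,
          ae_restrict_of_ae (Measure.ae_ne volume y⁻¹)] with s hs hsy
        exact abs_measureReal_sub_volume_real_superlevel_le_of_ball hy hδ hball hs hsy
    _ ≤ ∫ s in Ioi 0, ε * V s :=
        setIntegral_mono_set (hV.const_mul ε) (.of_forall fun s ↦ by positivity)
          (Ioi_subset_Ioi (by positivity : 0 ≤ a)).eventuallyLE
    _ = ε * π := by rw [integral_const_mul, hVπ]
  calc |∫ t, halfPlanePoissonKernel x y t ∂ν - π * L| = |∫ s in Ioi 0, (G s - L * V s)| := by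
        rw [integral_sub hG (hV.const_mul L), integral_const_mul, hVπ,
          hP.integral_eq_integral_meas_le hP_nn, mul_comm]
    _ ≤ ∫ s in Ioi 0, |G s - L * V s| := abs_integral_le_integral_abs
    _ = (∫ s in Ioc 0 a, |G s - L * V s|) + ∫ s in Ioi a, |G s - L * V s| := by
        rw [← hsplit] at hD ⊢
        exact setIntegral_union Ioc_disjoint_Ioi_same measurableSet_Ioi
          (hD.mono_set subset_union_left) (hD.mono_set subset_union_right)
    _ ≤ _ := by linarith

end PoissonIntegral

lemma exists_ball_estimate_of_tendsto_div {ν : Measure ℝ} {x L ε : ℝ}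
    (h : Tendsto (fun r ↦ ν.real (closedBall x r) / volume.real (closedBall x r)) (𝓝[>] 0) (𝓝 L))
    (hε : 0 < ε) :
    ∃ δ > 0, ∀ r ∈ Ioc 0 δ, |ν.real (closedBall x r) - L * volume.real (closedBall x r)| ≤
      ε * volume.real (closedBall x r) := by
  obtain ⟨δ, hδ, hsub⟩ := mem_nhdsGT_iff_exists_Ioc_subset.1 (Metric.tendsto_nhds.1 h ε hε)
  refine ⟨δ, hδ, fun r hr ↦ ?_⟩
  set B := closedBall x r
  have hB : 0 < volume.real B := by
    rw [Real.volume_real_closedBall hr.1.le]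
    linarith [hr.1]
  have hdist : |ν.real B / volume.real B - L| < ε := hsub hr
  rw [show ν.real B - L * volume.real B = (ν.real B / volume.real B - L) * volume.real B by
    field_simp, abs_mul, abs_of_pos hB]
  gcongr

theorem tendsto_integral_halfPlanePoissonKernel_of_tendsto_div {ν : Measure ℝ} [IsFiniteMeasure ν]
    {x L : ℝ}
    (h : Tendsto (fun r ↦ ν.real (closedBall x r) / volume.real (closedBall x r)) (𝓝[>] 0) (𝓝 L)) :
    Tendsto (fun y ↦ π⁻¹ * ∫ t, halfPlanePoissonKernel x y t ∂ν) (𝓝[>] 0) (𝓝 L) := by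
  have hL : 0 ≤ L := ge_of_tendsto h (.of_forall fun r ↦ by positivity)
  rw [Metric.tendsto_nhds]
  intro ε hε
  obtain ⟨δ, hδ, hball⟩ := exists_ball_estimate_of_tendsto_div h (half_pos hε)
  set err : ℝ → ℝ := fun y ↦ π⁻¹ * (ν.real univ * (y / δ ^ 2) + 4 * L * y / δ)
  have herr : Tendsto err (𝓝[>] 0) (𝓝 0) := by
    apply tendsto_nhdsWithin_of_tendsto_nhds
    simpa [err] using ((by fun_prop) : Continuous err).tendsto 0
  filter_upwards [herr.eventually (gt_mem_nhds (half_pos hε)), self_mem_nhdsWithin] with y herr hy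
  have hkey := abs_integral_halfPlanePoissonKernel_sub_le hy hL (half_pos hε).le hδ hball
  calc dist (π⁻¹ * ∫ t, halfPlanePoissonKernel x y t ∂ν) L
      = π⁻¹ * |∫ t, halfPlanePoissonKernel x y t ∂ν - π * L| := by
        rw [Real.dist_eq, ← abs_of_pos (inv_pos.2 Real.pi_pos), ← abs_mul, mul_sub,
          inv_mul_cancel_left₀ Real.pi_ne_zero, abs_of_pos (inv_pos.2 Real.pi_pos)]
    _ ≤ π⁻¹ * (ν.real univ * (y / δ ^ 2) + 4 * L * y / δ + ε / 2 * π) := by gcongr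
    _ < ε := by
        have hπ : π⁻¹ * (ε / 2 * π) = ε / 2 := by field_simp
        linarith [mul_add π⁻¹ (ν.real univ * (y / δ ^ 2) + 4 * L * y / δ) (ε / 2 * π)]

theorem ae_tendsto_integral_halfPlanePoissonKernel_rnDeriv (ν : Measure ℝ) [IsFiniteMeasure ν] :
    ∀ᵐ x, Tendsto (fun y ↦ π⁻¹ * ∫ t, halfPlanePoissonKernel x y t ∂ν) (𝓝[>] 0)
      (𝓝 (ν.rnDeriv volume x).toReal) := by
  filter_upwards [Besicovitch.ae_tendsto_rnDeriv ν volume, ν.rnDeriv_lt_top volume] with x hx hfin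
  refine tendsto_integral_halfPlanePoissonKernel_of_tendsto_div
    (((ENNReal.tendsto_toReal hfin.ne).comp hx).congr fun r ↦ ?_)
  simp [measureReal_def, ENNReal.toReal_div]

lemma integrable_inv_ofReal_sub (ν : Measure ℝ) [IsFiniteMeasure ν] {z : ℂ} (hz : z.im ≠ 0) :
    Integrable (fun t : ℝ ↦ ((t : ℂ) - z)⁻¹) ν := by
  have hne (t : ℝ) : (t : ℂ) - z ≠ 0 := fun h ↦ hz (by simpa using congrArg Complex.im h)
  refine .of_bound ((continuous_ofReal.sub continuous_const).inv₀ hne).aestronglyMeasurable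
    |z.im|⁻¹ (.of_forall fun t ↦ ?_)
  rw [norm_inv]
  refine inv_anti₀ (abs_pos.2 hz) ?_
  simpa using abs_im_le_norm ((t : ℂ) - z)

lemma im_borelTransform (ν : Measure ℝ) [IsFiniteMeasure ν] (x : ℝ) {y : ℝ} (hy : 0 < y) :
    (borelTransform ν (x + y * I)).im = ∫ t, halfPlanePoissonKernel x y t ∂ν := by
  have h := integral_im (integrable_inv_ofReal_sub ν (z := x + y * I) (by simp [hy.ne']))
  simp only [RCLike.im_to_complex] at h
  rw [borelTransform, ← h]
  congr with t
  simp [halfPlanePoissonKernel, Complex.inv_im, normSq_apply]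
  ring

lemma im_div_one_add_ofReal_mul (w : ℂ) (γ : ℝ) :
    (w / (1 + γ * w)).im = w.im / ‖1 + γ * w‖ ^ 2 := by
  rw [div_im, Complex.sq_norm]
  simp
  ring

section RankOnePert

variable {E : Type*} [NormedAddCommGroup E] [InnerProductSpace ℂ E]

lemma rankOnePert_apply (A : E →ₗ.[ℂ] E) (φ : E) (γ : ℝ) {x : E} (hx : x ∈ A.domain) :
    rankOnePert A φ γ ⟨x, hx⟩ = A ⟨x, hx⟩ + (γ : ℂ) • ⟪φ, x⟫_ℂ • φ :=
  rfl

lemma rankOnePert_zero (A : E →ₗ.[ℂ] E) (φ : E) : rankOnePert A φ 0 = A :=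
  LinearPMap.ext rfl fun x hx _ ↦ by simp [rankOnePert_apply A φ 0 hx]

lemma inner_eq_div_of_rankOnePert_sub_smul_eq {F : Type*} [FunLike F E E] [LinearMapClass F ℂ E E]
    {A : E →ₗ.[ℂ] E} {φ v : E} {γ : ℝ} {z : ℂ} {R₀ : F}
    (hR₀ : ∀ y (hy : y ∈ A.domain), R₀ (A ⟨y, hy⟩ - z • y) = y)
    (hv : v ∈ A.domain) (hφ : rankOnePert A φ γ ⟨v, hv⟩ - z • v = φ) :
    ⟪φ, v⟫_ℂ = ⟪φ, R₀ φ⟫_ℂ / (1 + γ * ⟪φ, R₀ φ⟫_ℂ) := by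
  have hAv : A ⟨v, hv⟩ - z • v = (1 - γ * ⟪φ, v⟫_ℂ) • φ := by
    rw [rankOnePert_apply] at hφ
    linear_combination (norm := module) hφ
  have hv_eq : v = (1 - γ * ⟪φ, v⟫_ℂ) • R₀ φ := by rw [← map_smul, ← hAv, hR₀]
  have hmul : ⟪φ, v⟫_ℂ * (1 + γ * ⟪φ, R₀ φ⟫_ℂ) = ⟪φ, R₀ φ⟫_ℂ := by
    have := congrArg (⟪φ, ·⟫_ℂ) hv_eq
    simp only [inner_smul_right] at this
    linear_combination this
  have hne : 1 + γ * ⟪φ, R₀ φ⟫_ℂ ≠ 0 := by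
    intro h
    rw [h, mul_zero] at hmul
    simp [← hmul] at h
  rw [eq_div_iff hne, hmul]

end RankOnePert

theorem ac_density_formula_general
    (A : H →ₗ.[ℂ] H)
    (φ : H)
    (R : ℝ → ℂ → H →L[ℂ] H)
    (hR1 : ∀ (γ : ℝ) (z : ℂ), z.im ≠ 0 → ∀ x : H,
      ∃ h : R γ z x ∈ (rankOnePert A φ γ).domain,
        (rankOnePert A φ γ) ⟨R γ z x, h⟩ - z • R γ z x = x)
    (hR2 : ∀ (γ : ℝ) (z : ℂ), z.im ≠ 0 → ∀ y (hy : y ∈ (rankOnePert A φ γ).domain),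
      R γ z ((rankOnePert A φ γ) ⟨y, hy⟩ - z • y) = y)
    (μ : ℝ → Measure ℝ) (hfin : ∀ γ, IsFiniteMeasure (μ γ))
    (hμ : ∀ (γ : ℝ) (z : ℂ), z.im ≠ 0 → ⟪φ, R γ z φ⟫_ℂ = borelTransform (μ γ) z)
    (γ : ℝ) :
    ∀ᵐ (x : ℝ) ∂(volume : Measure ℝ),
      Tendsto (fun y : ℝ => (Real.pi)⁻¹ *
          ((borelTransform (μ 0) ((x : ℂ) + y * Complex.I)).im /
            ‖1 + γ * borelTransform (μ 0) ((x : ℂ) + y * Complex.I)‖ ^ 2))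
        (𝓝[>] 0) (𝓝 (((μ γ).rnDeriv volume x).toReal)) := by
  have := hfin γ
  have := hfin 0
  have hkrein (z : ℂ) (hz : z.im ≠ 0) : borelTransform (μ γ) z =
      borelTransform (μ 0) z / (1 + γ * borelTransform (μ 0) z) := by
    obtain ⟨hv, hφ⟩ := hR1 γ z hz φ
    rw [← hμ γ z hz, ← hμ 0 z hz]
    have hR₀ := hR2 0 z hz
    rw [rankOnePert_zero] at hR₀
    exact inner_eq_div_of_rankOnePert_sub_smul_eq (A := A) hR₀ hv hφ
  filter_upwards [ae_tendsto_integral_halfPlanePoissonKernel_rnDeriv (μ γ)] with x hx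
  refine hx.congr' ?_
  filter_upwards [self_mem_nhdsWithin] with y (hy : 0 < y)
  rw [← im_borelTransform _ _ hy, hkrein _ (by simp [hy.ne']), im_div_one_add_ofReal_mul]

/-- **Density of the absolutely continuous part**: for `γ ≠ 0`, for Lebesgue-a.e. `x ∈ ℝ`,
`d(μ_γ)_ac/dx (x) = (1/π) lim_{y→0+} Im F(x+iy) / |1 + γ F(x+iy)|²`. -/
theorem ac_density_formula
    [TopologicalSpace.SeparableSpace H]
    (A : H →ₗ.[ℂ] H) (hA : IsSelfAdjoint A)
    (φ : H) (hφ : ‖φ‖ = 1)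
    (R : ℝ → ℂ → H →L[ℂ] H)
    (hR1 : ∀ (γ : ℝ) (z : ℂ), z.im ≠ 0 → ∀ x : H,
      ∃ h : R γ z x ∈ (rankOnePert A φ γ).domain,
        (rankOnePert A φ γ) ⟨R γ z x, h⟩ - z • R γ z x = x)
    (hR2 : ∀ (γ : ℝ) (z : ℂ), z.im ≠ 0 → ∀ y (hy : y ∈ (rankOnePert A φ γ).domain),
      R γ z ((rankOnePert A φ γ) ⟨y, hy⟩ - z • y) = y)
    (hcyc : (Submodule.span ℂ {x : H | ∃ z : ℂ, z.im ≠ 0 ∧ x = R 0 z φ}).topologicalClosure = ⊤)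
    (μ : ℝ → Measure ℝ) (hfin : ∀ γ, IsFiniteMeasure (μ γ))
    (hμ : ∀ (γ : ℝ) (z : ℂ), z.im ≠ 0 → ⟪φ, R γ z φ⟫_ℂ = borelTransform (μ γ) z)
    (γ : ℝ) (hγ : γ ≠ 0) :
    ∀ᵐ (x : ℝ) ∂(volume : Measure ℝ),
      Tendsto (fun y : ℝ => (Real.pi)⁻¹ *
          ((borelTransform (μ 0) ((x : ℂ) + y * Complex.I)).im /
            ‖1 + γ * borelTransform (μ 0) ((x : ℂ) + y * Complex.I)‖ ^ 2))
        (𝓝[>] 0) (𝓝 (((μ γ).rnDeriv volume x).toReal)) :=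
  ac_density_formula_general A φ R hR1 hR2 μ hfin hμ γ
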